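/- arXiv:math-ph/0605012 — 5 statements merged into one kernel-verified Lean document; each statement's English description precedes it below -/
import Mathlib

section
/- For every real σ > 0, the Bose function g_σ(ζ) = (ζ/Γ(σ)) ∫₀^∞ t^{σ-1} e^{-t} / (1 − ζ e^{-t}) dt is a well-defined complex-differentiable (analytic) function of ζ on the open set ℂ \ [1, ∞). -/
/-!
For `t > 0` the denominator is `1 - ζ x` with `x = e^{-t} ∈ [0, 1]`, which vanishes only if
`ζ = 1/x ∈ [1, ∞)`. By compactness of `K × [0, 1]`, on every compact `K ⊆ ℂ \ [1, ∞)` it is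
bounded below by some `s > 0`. Hence the integrand and its `ζ`-derivative are dominated by
`|t^{σ-1} e^{-t}| / s` and `|t^{σ-1} e^{-t}| / s²`, which are integrable (Euler's integral
for `Γ(σ)`), and one differentiates under the integral sign.
-/

open MeasureTheory Metric Set

lemma isClosed_ofReal_image_Ici (a : ℝ) : IsClosed (Complex.ofReal '' Ici a) :=
  Complex.isometry_ofReal.isClosedEmbedding.isClosedMap _ isClosed_Ici

lemma one_sub_mul_ofReal_ne_zero {ζ : ℂ} (hζ : ζ ∉ Complex.ofReal '' Ici 1) {x : ℝ}
    (hx : x ∈ Icc 0 1) : 1 - ζ * x ≠ 0 := by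
  intro h
  have hx₀ : 0 < x := hx.1.lt_of_ne (by rintro rfl; simp at h)
  refine hζ ⟨x⁻¹, (one_le_inv₀ hx₀).2 hx.2, ?_⟩
  have : (x : ℂ) ≠ 0 := by exact_mod_cast hx₀.ne'
  push_cast
  field_simp
  linear_combination h

lemma exists_pos_le_norm_one_sub_mul_ofReal {K : Set ℂ} (hK : IsCompact K)
    (hKcut : K ⊆ (Complex.ofReal '' Ici 1)ᶜ) :
    ∃ s > 0, ∀ ζ ∈ K, ∀ x ∈ Icc (0 : ℝ) 1, s ≤ ‖1 - ζ * x‖ := by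
  rcases K.eq_empty_or_nonempty with rfl | hne
  · exact ⟨1, one_pos, by simp⟩
  have hcont : Continuous fun p : ℂ × ℝ => ‖1 - p.1 * p.2‖ := by fun_prop
  obtain ⟨p, hp, hmin⟩ := (hK.prod isCompact_Icc).exists_isMinOn
    (hne.prod (nonempty_Icc.2 zero_le_one)) hcont.continuousOn
  exact ⟨_, norm_pos_iff.2 (one_sub_mul_ofReal_ne_zero (hKcut hp.1) hp.2),
    fun ζ hζ x hx => hmin (mk_mem_prod hζ hx)⟩

lemma hasDerivAt_div_one_sub_mul {c a ζ : ℂ} (h : 1 - ζ * a ≠ 0) :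
    HasDerivAt (fun z => c / (1 - z * a)) (c * a / (1 - ζ * a) ^ 2) ζ := by
  have hden : HasDerivAt (fun z : ℂ => 1 - z * a) (-a) ζ := by
    simpa using ((hasDerivAt_id ζ).mul_const a).const_sub 1
  refine ((hasDerivAt_const ζ c).div hden h).congr_deriv ?_
  ring

section

variable {α : Type*} [MeasurableSpace α] {μ : Measure α} {f : α → ℂ} {g : α → ℝ}

lemma exists_pos_ae_le_norm_one_sub_mul (hg : ∀ᵐ t ∂μ, g t ∈ Icc 0 1) {K : Set ℂ}
    (hK : IsCompact K) (hKcut : K ⊆ (Complex.ofReal '' Ici 1)ᶜ) :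
    ∃ s > 0, ∀ᵐ t ∂μ, ∀ ζ ∈ K, s ≤ ‖1 - ζ * g t‖ := by
  obtain ⟨s, hs, hle⟩ := exists_pos_le_norm_one_sub_mul_ofReal hK hKcut
  exact ⟨s, hs, hg.mono fun t ht ζ hζ => hle ζ hζ (g t) ht⟩

lemma aestronglyMeasurable_div_one_sub_mul (hf : AEStronglyMeasurable f μ)
    (hg : AEStronglyMeasurable g μ) (ζ : ℂ) :
    AEStronglyMeasurable (fun t => f t / (1 - ζ * g t)) μ :=
  hf.div₀ (aestronglyMeasurable_const.sub
    (aestronglyMeasurable_const.mul (Complex.continuous_ofReal.comp_aestronglyMeasurable hg)))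

lemma integrable_div_one_sub_mul (hf : Integrable f μ) (hg : AEStronglyMeasurable g μ)
    (hg01 : ∀ᵐ t ∂μ, g t ∈ Icc 0 1) {ζ : ℂ} (hζ : ζ ∉ Complex.ofReal '' Ici 1) :
    Integrable (fun t => f t / (1 - ζ * g t)) μ := by
  obtain ⟨s, hs, hle⟩ := exists_pos_ae_le_norm_one_sub_mul hg01 isCompact_singleton
    (singleton_subset_iff.2 hζ)
  refine (hf.norm.div_const s).mono' (aestronglyMeasurable_div_one_sub_mul hf.1 hg ζ) ?_
  filter_upwards [hle] with t ht
  rw [norm_div]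
  gcongr
  exact ht ζ rfl

lemma differentiableOn_integral_div_one_sub_mul (hf : Integrable f μ)
    (hg : AEStronglyMeasurable g μ) (hg01 : ∀ᵐ t ∂μ, g t ∈ Icc 0 1) :
    DifferentiableOn ℂ (fun ζ => ∫ t, f t / (1 - ζ * g t) ∂μ) (Complex.ofReal '' Ici 1)ᶜ := by
  have hopen := (isClosed_ofReal_image_Ici 1).isOpen_compl
  intro ζ₀ hζ₀
  obtain ⟨ε, hε, hball⟩ := nhds_basis_closedBall.mem_iff.1 (hopen.mem_nhds hζ₀)
  obtain ⟨s, hs, hle⟩ := exists_pos_ae_le_norm_one_sub_mul hg01 (isCompact_closedBall ζ₀ ε) hball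
  have hne : ∀ᵐ t ∂μ, ∀ ζ ∈ ball ζ₀ ε, 1 - ζ * g t ≠ 0 := hle.mono fun t ht ζ hζ =>
    norm_pos_iff.1 (hs.trans_le (ht ζ (ball_subset_closedBall hζ)))
  have hderiv := hasDerivAt_integral_of_dominated_loc_of_deriv_le
    (F' := fun ζ t => f t * g t / (1 - ζ * g t) ^ 2) (bound := fun t => ‖f t‖ / s ^ 2)
    (ball_mem_nhds ζ₀ hε)
    (Filter.Eventually.of_forall (aestronglyMeasurable_div_one_sub_mul hf.1 hg))
    (integrable_div_one_sub_mul hf hg hg01 hζ₀)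
    ((hf.1.mul (Complex.continuous_ofReal.comp_aestronglyMeasurable hg)).div₀
      ((aestronglyMeasurable_const.sub (aestronglyMeasurable_const.mul
        (Complex.continuous_ofReal.comp_aestronglyMeasurable hg))).pow 2))
    ?_ (hf.norm.div_const _)
    (hne.mono fun t ht ζ hζ => hasDerivAt_div_one_sub_mul (ht ζ hζ))
  · exact hderiv.2.differentiableAt.differentiableWithinAt
  filter_upwards [hle, hg01] with t ht hgt ζ hζ
  rw [norm_div, norm_mul, norm_pow, Complex.norm_real, Real.norm_of_nonneg hgt.1]
  calc ‖f t‖ * g t / ‖1 - ζ * g t‖ ^ 2 ≤ ‖f t‖ * 1 / s ^ 2 := by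
        gcongr
        exacts [hgt.2, ht ζ (ball_subset_closedBall hζ)]
    _ = ‖f t‖ / s ^ 2 := by rw [mul_one]

end

/-- For `σ > 0`, the Bose function
`g_σ(ζ) = (ζ/Γ(σ)) ∫₀^∞ t^{σ-1} e^{-t} / (1 − ζ e^{-t}) dt`
is well defined (the integrand is integrable) and complex differentiable (analytic)
on the open set `ℂ \ [1, ∞)`. -/
theorem stmt_1 (σ : ℝ) (hσ : 0 < σ) :
    (∀ ζ : ℂ, ζ ∉ Complex.ofReal '' Set.Ici (1 : ℝ) →
      IntegrableOn (fun t : ℝ =>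
        (t : ℂ) ^ ((σ : ℂ) - 1) * Complex.exp (-t) / (1 - ζ * Complex.exp (-t)))
        (Set.Ioi (0 : ℝ))) ∧
    DifferentiableOn ℂ
      (fun ζ : ℂ => ζ / Complex.Gamma σ *
        ∫ t in Set.Ioi (0 : ℝ),
          (t : ℂ) ^ ((σ : ℂ) - 1) * Complex.exp (-t) / (1 - ζ * Complex.exp (-t)))
      (Complex.ofReal '' Set.Ici (1 : ℝ))ᶜ := by
  have hexp (t : ℝ) : Complex.exp (-t) = Real.exp (-t) := by push_cast; rfl
  have hf : IntegrableOn (fun t : ℝ => (t : ℂ) ^ ((σ : ℂ) - 1) * Real.exp (-t)) (Ioi 0) := by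
    simpa only [mul_comm] using Complex.GammaIntegral_convergent (s := σ) (by simpa using hσ)
  have hg : AEStronglyMeasurable (fun t : ℝ => Real.exp (-t)) (volume.restrict (Ioi 0)) :=
    (Real.continuous_exp.comp continuous_neg).aestronglyMeasurable
  have hg01 : ∀ᵐ t ∂volume.restrict (Ioi 0), Real.exp (-t) ∈ Icc 0 1 :=
    ae_restrict_of_forall_mem measurableSet_Ioi fun t ht =>
      ⟨(Real.exp_pos _).le, Real.exp_le_one_iff.2 (neg_nonpos.2 (le_of_lt ht))⟩
  simp only [hexp]
  exact ⟨fun ζ hζ => integrable_div_one_sub_mul hf hg hg01 hζ,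
    (differentiableOn_id.div_const _).mul (differentiableOn_integral_div_one_sub_mul hf hg hg01)⟩
end

section
/- Fix β > 0 and ω > 0, and define for real 0 < x < e^{βω/2} the infinite-volume density ρ_∞(β,x,ω) = βω (2πβ)^{-3/2} Σ_{k=0}^∞ g_{1/2}( x e^{-(k+1/2)ωβ} ). Then ρ_∞(β,x,ω) tends to +∞ as x increases to e^{βω/2}; in other words, Bose–Einstein condensation is absent at nonzero magnetic field. -/
/-!
The outer series is dominated by a geometric series, since `g_σ(ζ) ≤ ζ / (1 - ζ)` and the
arguments `x e^{-(k+1/2)ωβ}` decay geometrically in `k`; its terms are nonnegative, so `ρ_∞`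
is at least a positive constant times its `k = 0` term `g_{1/2}(x e^{-βω/2})`, whose
argument tends to `1`. Finally `g_σ(ζ) → ∞` as `ζ → 1⁻` for `σ ≤ 1`: its partial sums are
continuous in `ζ` and at `ζ = 1` are the partial sums of the divergent series `∑ n^{-σ}`.
-/

open Real Filter Topology Set

/-- `bose σ ζ = g_σ(ζ)`, with the summation index shifted to start at `0`. -/
noncomputable def bose (σ ζ : ℝ) : ℝ := ∑' n : ℕ, ζ ^ (n + 1) / ((n : ℝ) + 1) ^ σ

section Bose

variable {σ ζ : ℝ}

lemma one_le_succ_rpow (hσ : 0 ≤ σ) (n : ℕ) : 1 ≤ ((n : ℝ) + 1) ^ σ :=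
  one_le_rpow (by linarith [n.cast_nonneg (α := ℝ)]) hσ

lemma summable_pow_succ (h0 : 0 ≤ ζ) (h1 : ζ < 1) : Summable (fun n : ℕ => ζ ^ (n + 1)) := by
  simpa only [pow_succ] using (summable_geometric_of_lt_one h0 h1).mul_right ζ

lemma summable_bose (hσ : 0 ≤ σ) (h0 : 0 ≤ ζ) (h1 : ζ < 1) :
    Summable (fun n : ℕ => ζ ^ (n + 1) / ((n : ℝ) + 1) ^ σ) :=
  (summable_pow_succ h0 h1).of_nonneg_of_le (fun _ => by positivity)
    fun n => div_le_self (by positivity) (one_le_succ_rpow hσ n)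

lemma bose_nonneg (h0 : 0 ≤ ζ) : 0 ≤ bose σ ζ :=
  tsum_nonneg fun _ => by positivity

lemma bose_le (hσ : 0 ≤ σ) (h0 : 0 ≤ ζ) (h1 : ζ < 1) :
    bose σ ζ ≤ ζ * (1 - ζ)⁻¹ := by
  have hgeom : ∑' n : ℕ, ζ ^ (n + 1) = ζ * (1 - ζ)⁻¹ := by
    simp only [pow_succ, tsum_mul_right, tsum_geometric_of_lt_one h0 h1]
    exact mul_comm _ _
  rw [← hgeom]
  exact (summable_bose hσ h0 h1).tsum_le_tsum
    (fun n => div_le_self (by positivity) (one_le_succ_rpow hσ n))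
    (summable_pow_succ h0 h1)

lemma not_summable_one_div_succ_rpow (hσ : σ ≤ 1) :
    ¬ Summable (fun n : ℕ => 1 / ((n : ℝ) + 1) ^ σ) := by
  intro h
  refine (summable_one_div_nat_rpow (p := σ)).not.mpr (not_lt.mpr hσ) ?_
  rw [← summable_nat_add_iff 1]
  exact h.congr fun n => by push_cast; rfl

lemma tendsto_bose_atTop (hσ₀ : 0 ≤ σ) (hσ₁ : σ ≤ 1) :
    Tendsto (bose σ) (𝓝[Ico 0 1] 1) atTop := by
  rw [tendsto_atTop]
  intro C
  have hdiv : Tendsto (fun N => ∑ n ∈ Finset.range N, 1 / ((n : ℝ) + 1) ^ σ) atTop atTop :=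
    (not_summable_iff_tendsto_nat_atTop_of_nonneg fun _ => by positivity).mp
      (not_summable_one_div_succ_rpow hσ₁)
  obtain ⟨N, hN⟩ := (hdiv.eventually_gt_atTop C).exists
  let partialSum : ℝ → ℝ := fun ζ =>
    ∑ n ∈ Finset.range N, ζ ^ (n + 1) / ((n : ℝ) + 1) ^ σ
  have hcont : Continuous partialSum := by fun_prop
  have hval : C < partialSum 1 := by simpa [partialSum] using hN
  have hnear : ∀ᶠ ζ in 𝓝 1, C < partialSum ζ :=
    continuousAt_const.eventually_lt hcont.continuousAt hval
  filter_upwards [nhdsWithin_le_nhds hnear, self_mem_nhdsWithin] with ζ hC hζ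
  exact hC.le.trans <| (summable_bose hσ₀ hζ.1 hζ.2).sum_le_tsum _ fun _ _ => by
    have := hζ.1; positivity

end Bose

section GeometricArguments

variable {σ a q : ℝ}

lemma summable_bose_mul_geometric (hσ : 0 ≤ σ) (ha₀ : 0 ≤ a) (ha₁ : a < 1)
    (hq₀ : 0 ≤ q) (hq₁ : q < 1) : Summable (fun k : ℕ => bose σ (a * q ^ k)) := by
  have hak : ∀ k : ℕ, a * q ^ k ≤ a := fun k =>
    mul_le_of_le_one_right ha₀ (pow_le_one₀ hq₀ hq₁.le)
  have hgeom := ((summable_geometric_of_lt_one hq₀ hq₁).mul_left a).mul_left (1 - a)⁻¹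
  refine hgeom.of_nonneg_of_le (fun k => bose_nonneg (by positivity)) fun k => ?_
  calc bose σ (a * q ^ k) ≤ a * q ^ k * (1 - a * q ^ k)⁻¹ :=
        bose_le hσ (by positivity) ((hak k).trans_lt ha₁)
    _ ≤ a * q ^ k * (1 - a)⁻¹ := by
        gcongr
        linarith [hak k]
    _ = (1 - a)⁻¹ * (a * q ^ k) := mul_comm _ _

lemma tendsto_tsum_bose_mul_geometric_atTop (hσ₀ : 0 ≤ σ) (hσ₁ : σ ≤ 1)
    (hq₀ : 0 ≤ q) (hq₁ : q < 1) :
    Tendsto (fun a => ∑' k : ℕ, bose σ (a * q ^ k)) (𝓝[Ico 0 1] 1) atTop := by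
  refine tendsto_atTop_mono' _ ?_ (tendsto_bose_atTop hσ₀ hσ₁)
  filter_upwards [self_mem_nhdsWithin] with a ha
  simpa using (summable_bose_mul_geometric hσ₀ ha.1 ha.2 hq₀ hq₁).le_tsum 0
    fun k _ => bose_nonneg (mul_nonneg ha.1 (pow_nonneg hq₀ k))

end GeometricArguments

/-- Absence of Bose–Einstein condensation at nonzero magnetic field: the
infinite-volume density
`ρ_∞(β,x,ω) = βω (2πβ)^{-3/2} Σ_{k≥0} g_{1/2}( x e^{-(k+1/2)ωβ} )`,
with `g_{1/2}(ζ) = Σ_{n≥1} ζⁿ/n^{1/2}`, tends to `+∞` as `x` increases to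
`e^{βω/2}` through `(0, e^{βω/2})`. -/
theorem stmt_4 (β ω : ℝ) (hβ : 0 < β) (hω : 0 < ω) :
    Tendsto
      (fun x : ℝ => β * ω * (2 * π * β) ^ (-(3/2) : ℝ) *
        ∑' k : ℕ, ∑' n : ℕ,
          (x * Real.exp (-(((k : ℝ) + 1/2)) * ω * β)) ^ (n + 1) /
            ((n : ℝ) + 1) ^ ((1/2 : ℝ)))
      (nhdsWithin (Real.exp (β * ω / 2)) (Set.Ioo 0 (Real.exp (β * ω / 2))))
      atTop := by
  have hargument : ∀ (x : ℝ) (k : ℕ),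
      x * exp (-((k : ℝ) + 1/2) * ω * β) = x / exp (β * ω / 2) * exp (-(ω * β)) ^ k := by
    intro x k
    rw [← exp_nat_mul, div_mul_eq_mul_div, mul_div_assoc, ← exp_sub]
    ring_nf
  set L := exp (β * ω / 2)
  have hL : 0 < L := exp_pos _
  have hrescale : Tendsto (fun x => x / L) (𝓝[Ioo 0 L] L) (𝓝[Ico 0 1] 1) := by
    refine tendsto_nhdsWithin_of_tendsto_nhds_of_eventually_within _ ?_ ?_
    · simpa [hL.ne'] using ((continuous_id.div_const L).tendsto L).mono_left nhdsWithin_le_nhds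
    · filter_upwards [self_mem_nhdsWithin] with x hx
      exact ⟨(div_pos hx.1 hL).le, (div_lt_one hL).mpr hx.2⟩
  have hq : exp (-(ω * β)) < 1 := exp_lt_one_iff.mpr (neg_neg_of_pos (mul_pos hω hβ))
  have hdensity := ((tendsto_tsum_bose_mul_geometric_atTop (σ := 1/2) (by norm_num) (by norm_num)
    (exp_pos _).le hq).comp hrescale).const_mul_atTop
      (show 0 < β * ω * (2 * π * β) ^ (-(3/2) : ℝ) by positivity)
  simpa only [Function.comp_def, bose, hargument] using hdensity
end

section
/- There exists a numerical constant c > 0 such that for all L ≥ 1, all β > 0 and all x, x' ∈ (−L/2, L/2): Σ_{m∈ℤ} exp( −(x+x'−(2m+1)L)²/(4β) ) ≤ c (1+β) exp( −(x−x')²/(4β) ). -/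
/-!
Put `d = x - x'`. Since `|x|, |x'| < L/2` we have `|x - x'| + |x + x'| < L`, so for odd `k`
(the mirror images sit at `k L`) we get `|x + x' - k L| ≥ |k| L - |x + x'| ≥ |d| + (|k| - 1)`,
using `L ≥ 1`. Squaring, the `m`-th image term is at most `exp (-d²/(4β)) * exp (-1/β) ^ n`
where `2n + 1 = |2m + 1|`. Every `n` arises from exactly two values of `m`, so the sum is
dominated by twice a geometric series of ratio `exp (-1/β)`, which is at most `2 (1 + β)`.
-/

open Real

lemma abs_sub_add_abs_add_lt {x x' L : ℝ} (hx : |x| < L / 2) (hx' : |x'| < L / 2) :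
    |x - x'| + |x + x'| < L := by
  rw [abs_lt] at hx hx'
  cases abs_cases (x - x') <;> cases abs_cases (x + x') <;> linarith

lemma sq_sub_add_sq_le_sq_add_sub_mul {x x' L k : ℝ} (hL : 1 ≤ L)
    (hx : |x| < L / 2) (hx' : |x'| < L / 2) (hk : 1 ≤ |k|) :
    (x - x') ^ 2 + (|k| - 1) ^ 2 ≤ (x + x' - k * L) ^ 2 := by
  have hdist : |x - x'| + (|k| - 1) ≤ |x + x' - k * L| := by
    have hkL : |k * L| = |k| * L := by rw [abs_mul, abs_of_pos (a := L) (by linarith)]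
    have := abs_sub_abs_le_abs_sub (k * L) (x + x')
    rw [abs_sub_comm (k * L), hkL] at this
    nlinarith [abs_sub_add_abs_add_lt hx hx']
  rw [← sq_abs (x - x'), ← sq_abs (x + x' - k * L)]
  nlinarith [abs_nonneg (x - x')]

/-- `mirrorIndex n = mirrorIndex (-(n + 1)) = n` for `n : ℕ`. -/
def mirrorIndex (m : ℤ) : ℕ := (2 * m + 1).natAbs / 2

lemma natAbs_two_mul_add_one (m : ℤ) : (2 * m + 1).natAbs = 2 * mirrorIndex m + 1 := by
  unfold mirrorIndex; omega

lemma hasSum_pow_mirrorIndex {r : ℝ} (hr₀ : 0 ≤ r) (hr₁ : r < 1) :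
    HasSum (fun m : ℤ => r ^ mirrorIndex m) (2 * (1 - r)⁻¹) := by
  have hnonneg : ∀ n : ℕ, mirrorIndex n = n := fun n => by unfold mirrorIndex; omega
  have hneg : ∀ n : ℕ, mirrorIndex (-(n + 1)) = n := fun n => by unfold mirrorIndex; omega
  rw [two_mul]
  exact .of_nat_of_neg_add_one (by simp_rw [hnonneg]; exact hasSum_geometric_of_lt_one hr₀ hr₁)
    (by simp_rw [hneg]; exact hasSum_geometric_of_lt_one hr₀ hr₁)

lemma exp_mirror_le_exp_mul_pow {x x' L β : ℝ} (hL : 1 ≤ L) (hβ : 0 < β)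
    (hx : |x| < L / 2) (hx' : |x'| < L / 2) (m : ℤ) :
    exp (-(x + x' - (2 * m + 1) * L) ^ 2 / (4 * β))
      ≤ exp (-(x - x') ^ 2 / (4 * β)) * exp (-1 / β) ^ mirrorIndex m := by
  set n := mirrorIndex m
  have habs : |(2 * m + 1 : ℝ)| = 2 * n + 1 := by
    have := congrArg (Nat.cast (R := ℝ)) (natAbs_two_mul_add_one m)
    rw [Nat.cast_natAbs, Int.cast_abs] at this
    exact_mod_cast this
  have hsq := sq_sub_add_sq_le_sq_add_sub_mul hL hx hx' (k := 2 * m + 1) (by rw [habs]; linarith)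
  rw [habs, add_sub_cancel_right] at hsq
  have h4n : 4 * (n : ℝ) ≤ (2 * n) ^ 2 := by
    have : n ≤ n ^ 2 := Nat.le_self_pow two_ne_zero n
    rw [mul_pow]; norm_num; exact_mod_cast this
  rw [← exp_nat_mul, ← exp_add, exp_le_exp, ← sub_nonneg]
  have key : -(x - x') ^ 2 / (4 * β) + n * (-1 / β) - -(x + x' - (2 * m + 1) * L) ^ 2 / (4 * β)
      = ((x + x' - (2 * m + 1) * L) ^ 2 - (x - x') ^ 2 - 4 * n) / (4 * β) := by
    field_simp; ring
  rw [key]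
  exact div_nonneg (by linarith) (by positivity)

lemma inv_one_sub_exp_neg_le {t : ℝ} (ht : 0 < t) : (1 - exp (-t))⁻¹ ≤ 1 + t⁻¹ := by
  have hr : exp (-t) * (1 + t) ≤ 1 := by
    calc exp (-t) * (1 + t) ≤ exp (-t) * exp t := by gcongr; linarith [add_one_le_exp t]
      _ = 1 := by rw [← exp_add, neg_add_cancel, exp_zero]
  have hpos : 0 < 1 - exp (-t) := by rw [sub_pos, exp_lt_one_iff]; linarith
  rw [inv_le_iff_one_le_mul₀ hpos]
  rw [← mul_le_mul_iff_of_pos_right ht]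
  field_simp
  nlinarith

/-- Summation estimate for the reflected (mirror) image terms of the
method-of-images Dirichlet heat kernel on `(−L/2, L/2)`. -/
theorem stmt_9 :
    ∃ c : ℝ, 0 < c ∧ ∀ (L β x x' : ℝ), 1 ≤ L → 0 < β →
      x ∈ Set.Ioo (-(L / 2)) (L / 2) → x' ∈ Set.Ioo (-(L / 2)) (L / 2) →
        ∑' m : ℤ, Real.exp (-(x + x' - (2 * m + 1) * L) ^ 2 / (4 * β))
          ≤ c * (1 + β) * Real.exp (-(x - x') ^ 2 / (4 * β)) := by
  refine ⟨2, two_pos, fun L β x x' hL hβ hx hx' => ?_⟩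
  rw [Set.mem_Ioo, ← abs_lt] at hx hx'
  set E := exp (-(x - x') ^ 2 / (4 * β))
  set r := exp (-1 / β)
  have hr₁ : r < 1 := exp_lt_one_iff.mpr (div_neg_of_neg_of_pos (by norm_num) hβ)
  have hmajor := (hasSum_pow_mirrorIndex (exp_nonneg _) hr₁).mul_left E
  have hterm := exp_mirror_le_exp_mul_pow hL hβ hx hx'
  have hsum := (hmajor.summable.of_nonneg_of_le (fun _ => (exp_pos _).le) hterm).hasSum
  have hgeom : (1 - r)⁻¹ ≤ 1 + β := by
    simpa [r, neg_div, inv_div] using inv_one_sub_exp_neg_le (one_div_pos.mpr hβ)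
  calc _ ≤ E * (2 * (1 - r)⁻¹) := hasSum_le hterm hsum hmajor
    _ ≤ 2 * (1 + β) * E := by nlinarith [exp_pos (-(x - x') ^ 2 / (4 * β))]
end

section
/- Define for x, x' ∈ ℝ³ and β > 0 the free heat kernel G_{0,∞}(x,x';β) = (2πβ)^{-3/2} exp(−|x−x'|²/(2β)), and for L ≥ 1 the cube kernel G_{0,L}(x,x';β) = Π_{j=1}³ g_{0,L}(x_j, x'_j; β), where g_{0,L}(x,x';β) = (2πβ)^{-1/2} Σ_{m∈ℤ}[exp(−(x−x'+2mL)²/(2β)) − exp(−(x+x'−2mL−L)²/(2β))]. Set Z_{0,L} = G_{0,L} − G_{0,∞}. Then there exist numerical constants c₁, c₂ > 0 such that for all L ≥ 1, β > 0 and x, x' in the open cube (−L/2, L/2)³: |Z_{0,L}(x, x'; β)| ≤ c₁ (1+β) G_{0,∞}(x, x'; c₂ β). -/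
open Real

/-- The one-dimensional Dirichlet method-of-images heat kernel on `(−L/2, L/2)`. -/
noncomputable def g0L (L x x' β : ℝ) : ℝ :=
  (2 * π * β) ^ (-(1/2) : ℝ) *
    ∑' m : ℤ, (Real.exp (-(x - x' + 2 * m * L) ^ 2 / (2 * β)) -
      Real.exp (-(x + x' - 2 * m * L - L) ^ 2 / (2 * β)))

/-- The free heat kernel on `ℝ³`. -/
noncomputable def G0inf (x x' : Fin 3 → ℝ) (β : ℝ) : ℝ :=
  (2 * π * β) ^ (-(3/2) : ℝ) * Real.exp (-(∑ j, (x j - x' j) ^ 2) / (2 * β))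

/-- The Dirichlet heat kernel of the cube `(−L/2, L/2)³`. -/
noncomputable def G0L (L : ℝ) (x x' : Fin 3 → ℝ) (β : ℝ) : ℝ :=
  ∏ j, g0L L (x j) (x' j) β

/-- The boundary remainder `Z_{0,L} = G_{0,L} − G_{0,∞}`. -/
noncomputable def Z0L (L : ℝ) (x x' : Fin 3 → ℝ) (β : ℝ) : ℝ :=
  G0L L x x' β - G0inf x x' β

/-!
In one dimension, for `|x|, |x'| ≤ L/2`, the image points can be paired so that every positive
image term except the direct one `m = 0` is dominated by a negative one, and every negative term by
a positive one. Hence the image sum lies within `exp (-(x - x')² / (2β))` of zero, i.e.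
`|g_{0,L}| ≤ g_{0,∞}`. Taking the product over the coordinates, `|G_{0,L}| ≤ G_{0,∞}`, so
`|Z_{0,L}| ≤ 2 G_{0,∞}` and `c₁ = 2`, `c₂ = 1` work.
-/

theorem summable_exp_neg_sq_div {a b : ℝ} (c : ℝ) (ha : a ≠ 0) (hb : 0 < b) :
    Summable fun n : ℤ => rexp (-(n * a + c) ^ 2 / b) := by
  -- the Jacobi theta series provides a summable Gaussian majorant
  refine (summable_pow_mul_jacobiTheta₂_term_bound (|a * c| / (π * b)) (T := a ^ 2 / (π * b))
    (by positivity) 0).of_nonneg_of_le (fun _ => (exp_pos _).le) fun n => ?_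
  have hcross : -(|a * c| * |(n : ℝ)|) ≤ n * (a * c) := by
    rw [mul_comm, ← abs_mul]; exact neg_abs_le _
  rw [pow_zero, one_mul, exp_le_exp, Int.cast_abs, div_le_iff₀ hb]
  field_simp
  nlinarith [sq_nonneg c]

theorem abs_tsum_sub_le_of_interlace {f g : ℤ → ℝ} (hf : Summable f) (hg : Summable g)
    (hfg_pos : ∀ n : ℕ, f (n + 1) ≤ g n) (hfg_neg : ∀ n : ℕ, f (-(n + 1)) ≤ g (-(n + 1)))
    (hgf_pos : ∀ n : ℕ, g n ≤ f n) (hgf_neg : ∀ n : ℕ, g (-(n + 1)) ≤ f (-n)) :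
    |∑' m, (f m - g m)| ≤ f 0 := by
  have restrict {h : ℤ → ℝ} (hh : Summable h) :
      (Summable fun n : ℕ => h n) ∧ (Summable fun n : ℕ => h (n + 1)) ∧
        (Summable fun n : ℕ => h (-n)) ∧ Summable fun n : ℕ => h (-(n + 1)) :=
    ⟨hh.comp_injective Nat.cast_injective, hh.comp_injective fun a b => by simp,
      hh.comp_injective fun a b => by simp, hh.comp_injective fun a b => by simp⟩
  obtain ⟨hf₀, hf₁, hf₂, hf₃⟩ := restrict hf
  obtain ⟨hg₀, -, -, hg₃⟩ := restrict hg
  have hf_split := tsum_of_add_one_of_neg_add_one hf₁ hf₃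
  have hg_split := tsum_of_nat_of_neg_add_one hg₀ hg₃
  have hf_neg : ∑' n : ℕ, f (-n) = f 0 + ∑' n : ℕ, f (-(n + 1)) := by
    simpa using hf₂.tsum_eq_zero_add
  rw [hf.tsum_sub hg, abs_sub_le_iff]
  constructor
  · linarith [hf₁.tsum_le_tsum hfg_pos hg₀, hf₃.tsum_le_tsum hfg_neg hg₃]
  · linarith [hg₀.tsum_le_tsum hgf_pos hf₀, hg₃.tsum_le_tsum hgf_neg hf₂,
      tsum_of_nat_of_neg_add_one hf₀ hf₃]

theorem exp_neg_sq_div_le_of_sq_le {β u v : ℝ} (hβ : 0 ≤ β) (h : u ^ 2 ≤ v ^ 2) :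
    rexp (-v ^ 2 / (2 * β)) ≤ rexp (-u ^ 2 / (2 * β)) :=
  exp_le_exp.mpr (div_le_div_of_nonneg_right (neg_le_neg h) (by positivity))

theorem abs_g0L_le {L β x x' : ℝ} (hL : 0 < L) (hβ : 0 < β) (hx : |x| ≤ L / 2)
    (hx' : |x'| ≤ L / 2) :
    |g0L L x x' β| ≤ (2 * π * β) ^ (-(1/2) : ℝ) * rexp (-(x - x') ^ 2 / (2 * β)) := by
  rw [abs_le] at hx hx'
  have hnL (n : ℕ) : 0 ≤ (n : ℝ) * L := by positivity
  have h2L : 2 * L ≠ 0 := by positivity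
  have key := abs_tsum_sub_le_of_interlace
    (f := fun m : ℤ => rexp (-(x - x' + 2 * m * L) ^ 2 / (2 * β)))
    (g := fun m : ℤ => rexp (-(x + x' - 2 * m * L - L) ^ 2 / (2 * β)))
    ((summable_exp_neg_sq_div (x - x') h2L (by positivity : 0 < 2 * β)).congr
      fun m => by ring_nf)
    ((summable_exp_neg_sq_div (L - x - x') h2L (by positivity : 0 < 2 * β)).congr
      fun m => by ring_nf)
    (fun n => exp_neg_sq_div_le_of_sq_le hβ.le <| by
      push_cast; exact sq_le_sq' (by linarith [hnL n]) (by linarith [hnL n]))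
    (fun n => exp_neg_sq_div_le_of_sq_le hβ.le <| by
      push_cast; exact (sq_le_sq' (by linarith [hnL n]) (by linarith [hnL n])).trans_eq (neg_sq _))
    (fun n => exp_neg_sq_div_le_of_sq_le hβ.le <| by
      push_cast; exact (sq_le_sq' (by linarith [hnL n]) (by linarith [hnL n])).trans_eq (neg_sq _))
    (fun n => exp_neg_sq_div_le_of_sq_le hβ.le <| by
      push_cast; exact sq_le_sq' (by linarith [hnL n]) (by linarith [hnL n]))
  rw [g0L, abs_mul, abs_of_pos (by positivity)]
  gcongr
  simpa using key

theorem G0inf_eq_prod {β : ℝ} (hβ : 0 ≤ β) (x x' : Fin 3 → ℝ) :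
    G0inf x x' β = ∏ j, (2 * π * β) ^ (-(1/2) : ℝ) * rexp (-(x j - x' j) ^ 2 / (2 * β)) := by
  rw [Finset.prod_mul_distrib, Finset.prod_const, Finset.card_univ, Fintype.card_fin,
    ← exp_sum, ← Finset.sum_div, Finset.sum_neg_distrib, ← rpow_natCast,
    ← rpow_mul (by positivity)]
  norm_num [G0inf]

theorem G0inf_nonneg {β : ℝ} (hβ : 0 ≤ β) (x x' : Fin 3 → ℝ) : 0 ≤ G0inf x x' β := by
  rw [G0inf]; positivity

theorem abs_G0L_le_G0inf {L β : ℝ} {x x' : Fin 3 → ℝ} (hL : 0 < L) (hβ : 0 < β)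
    (hx : ∀ j, |x j| ≤ L / 2) (hx' : ∀ j, |x' j| ≤ L / 2) :
    |G0L L x x' β| ≤ G0inf x x' β := by
  rw [G0L, Finset.abs_prod, G0inf_eq_prod hβ.le]
  exact Finset.prod_le_prod (fun j _ => abs_nonneg _)
    fun j _ => abs_g0L_le hL hβ (hx j) (hx' j)

theorem abs_Z0L_le_two_mul_G0inf {L β : ℝ} {x x' : Fin 3 → ℝ} (hL : 0 < L) (hβ : 0 < β)
    (hx : ∀ j, |x j| ≤ L / 2) (hx' : ∀ j, |x' j| ≤ L / 2) :
    |Z0L L x x' β| ≤ 2 * G0inf x x' β := by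
  calc |Z0L L x x' β| ≤ |G0L L x x' β| + |G0inf x x' β| := abs_sub _ _
    _ ≤ 2 * G0inf x x' β := by
      rw [abs_of_nonneg (G0inf_nonneg hβ.le x x')]
      linarith [abs_G0L_le_G0inf hL hβ hx hx']

/-- Gaussian bound for the boundary remainder of the cube heat kernel:
`|Z_{0,L}(x, x'; β)| ≤ c₁ (1+β) G_{0,∞}(x, x'; c₂ β)`. -/
theorem stmt_10 :
    ∃ c₁ c₂ : ℝ, 0 < c₁ ∧ 0 < c₂ ∧
      ∀ (L β : ℝ) (x x' : Fin 3 → ℝ), 1 ≤ L → 0 < β →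
        (∀ j, x j ∈ Set.Ioo (-(L / 2)) (L / 2)) →
        (∀ j, x' j ∈ Set.Ioo (-(L / 2)) (L / 2)) →
          |Z0L L x x' β| ≤ c₁ * (1 + β) * G0inf x x' (c₂ * β) := by
  refine ⟨2, 1, two_pos, one_pos, fun L β x x' hL hβ hx hx' => ?_⟩
  have mem_abs_le {y : Fin 3 → ℝ} (hy : ∀ j, y j ∈ Set.Ioo (-(L / 2)) (L / 2)) j :
      |y j| ≤ L / 2 :=
    abs_le.mpr ⟨(hy j).1.le, (hy j).2.le⟩
  rw [one_mul]
  calc |Z0L L x x' β| ≤ 2 * G0inf x x' β :=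
        abs_Z0L_le_two_mul_G0inf (by linarith) hβ (mem_abs_le hx) (mem_abs_le hx')
    _ ≤ 2 * (1 + β) * G0inf x x' β := by nlinarith [G0inf_nonneg hβ.le x x']
end

section
/- Let (a_j)_{j∈ℕ} be positive reals with a_j ≤ r for all j and Σ_j a_j < ∞, and let 0 < x < 1/r. Define p(φ) = −(1/2) Σ_j log[ (1 − x a_j cos φ)² + x² a_j² sin² φ ] for φ ∈ ℝ (the series converges absolutely and each argument of log is positive). Then: (i) p is even, p(−φ) = p(φ); (ii) p is differentiable with p'(φ) = −x sin φ · Σ_j a_j / |1 − x a_j e^{iφ}|², so p is decreasing on [0, π]; (iii) p is twice differentiable at 0 with p''(0) = −x Σ_j a_j / (1 − x a_j)². -/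
/-!
Write `c_j = x a_j`, so `0 < c_j ≤ q := x r < 1` and `Σ c_j < ∞`. The `j`-th summand is
`log |1 - c_j e^{iφ}|² = log (1 - 2 c_j cos φ + c_j²)`, whose argument stays above `(1 - q)²`.
Hence the termwise derivatives `2 c_j sin φ / |1 - c_j e^{iφ}|²` are bounded by a multiple
of `c_j` uniformly in `φ`, and the series may be differentiated term by term; the same bound
makes `φ ↦ Σ_j a_j / |1 - c_j e^{iφ}|²` differentiable, which is all that `p''(0)` needs since
the factor `sin φ` in front of it vanishes at `0`.
-/

open Real Set

noncomputable def normSqOneSubExp (c φ : ℝ) : ℝ := 1 - 2 * c * cos φ + c ^ 2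

lemma norm_one_sub_mul_exp_sq (c φ : ℝ) :
    ‖(1 : ℂ) - c * Complex.exp (φ * Complex.I)‖ ^ 2 = normSqOneSubExp c φ := by
  have h : (1 : ℂ) - c * Complex.exp (φ * Complex.I)
      = ((1 - c * cos φ : ℝ) : ℂ) + ((-(c * sin φ) : ℝ) : ℂ) * Complex.I := by
    rw [Complex.exp_mul_I]
    push_cast [← Complex.ofReal_cos, ← Complex.ofReal_sin]
    ring
  rw [h, Complex.sq_norm, Complex.normSq_add_mul_I, normSqOneSubExp]
  linear_combination c ^ 2 * sin_sq_add_cos_sq φ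

lemma sq_one_sub_mul_cos_add_sq_mul_sin_sq (c φ : ℝ) :
    (1 - c * cos φ) ^ 2 + c ^ 2 * sin φ ^ 2 = normSqOneSubExp c φ := by
  rw [normSqOneSubExp]
  linear_combination c ^ 2 * sin_sq_add_cos_sq φ

lemma normSqOneSubExp_zero (c : ℝ) : normSqOneSubExp c 0 = (1 - c) ^ 2 := by
  rw [normSqOneSubExp, cos_zero]
  ring

lemma normSqOneSubExp_pi_div_two (c : ℝ) : normSqOneSubExp c (π / 2) = 1 + c ^ 2 := by
  rw [normSqOneSubExp, cos_pi_div_two]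
  ring

lemma normSqOneSubExp_neg (c φ : ℝ) : normSqOneSubExp c (-φ) = normSqOneSubExp c φ := by
  rw [normSqOneSubExp, normSqOneSubExp, cos_neg]

lemma sq_one_sub_le_normSqOneSubExp {c q : ℝ} (hc : 0 ≤ c) (hcq : c ≤ q) (hq : q < 1)
    (φ : ℝ) : (1 - q) ^ 2 ≤ normSqOneSubExp c φ :=
  calc (1 - q) ^ 2 ≤ (1 - c) ^ 2 := pow_le_pow_left₀ (by linarith) (by linarith) 2
    _ = 1 - 2 * c * 1 + c ^ 2 := by ring
    _ ≤ normSqOneSubExp c φ := by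
      rw [normSqOneSubExp]
      nlinarith [cos_le_one φ]

lemma normSqOneSubExp_pos {c q : ℝ} (hc : 0 ≤ c) (hcq : c ≤ q) (hq : q < 1) (φ : ℝ) :
    0 < normSqOneSubExp c φ :=
  (pow_pos (sub_pos.2 hq) 2).trans_le (sq_one_sub_le_normSqOneSubExp hc hcq hq φ)

lemma hasDerivAt_normSqOneSubExp (c φ : ℝ) :
    HasDerivAt (normSqOneSubExp c) (2 * c * sin φ) φ := by
  have h := (((hasDerivAt_cos φ).const_mul (2 * c)).const_sub 1).add_const (c ^ 2)
  exact h.congr_deriv (by ring)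

lemma abs_two_mul_mul_sin_le {c : ℝ} (hc : 0 ≤ c) (φ : ℝ) : |2 * c * sin φ| ≤ 2 * c := by
  rw [abs_mul, abs_of_nonneg (by positivity : 0 ≤ 2 * c)]
  exact mul_le_of_le_one_right (by positivity) (abs_sin_le_one φ)

section Series

variable {c : ℕ → ℝ} {q : ℝ}

lemma summable_log_normSqOneSubExp_pi_div_two (hc0 : ∀ j, 0 ≤ c j) (hcq : ∀ j, c j ≤ q)
    (hq : q < 1) (hc : Summable c) :
    Summable fun j => log (normSqOneSubExp (c j) (π / 2)) := by
  refine hc.of_nonneg_of_le (fun j => ?_) (fun j => ?_) <;>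
    rw [normSqOneSubExp_pi_div_two]
  · exact log_nonneg (by nlinarith)
  · -- `log (1 + c²) ≤ c² ≤ c` as `0 ≤ c < 1`
    have := log_le_sub_one_of_pos (by positivity : 0 < 1 + c j ^ 2)
    nlinarith [hc0 j, hcq j]

theorem hasDerivAt_tsum_log_normSqOneSubExp (hc0 : ∀ j, 0 ≤ c j) (hcq : ∀ j, c j ≤ q)
    (hq : q < 1) (hc : Summable c) (φ : ℝ) :
    HasDerivAt (fun ψ => ∑' j, log (normSqOneSubExp (c j) ψ))
      (∑' j, 2 * c j * sin φ / normSqOneSubExp (c j) φ) φ := by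
  have hε : 0 < (1 - q) ^ 2 := pow_pos (sub_pos.2 hq) 2
  refine hasDerivAt_tsum (hc.mul_left (2 / (1 - q) ^ 2))
    (fun j ψ => (hasDerivAt_normSqOneSubExp (c j) ψ).log
      (normSqOneSubExp_pos (hc0 j) (hcq j) hq ψ).ne')
    (fun j ψ => ?_) (summable_log_normSqOneSubExp_pi_div_two hc0 hcq hq hc) φ
  rw [norm_div, Real.norm_eq_abs,
    Real.norm_of_nonneg (normSqOneSubExp_pos (hc0 j) (hcq j) hq ψ).le, div_mul_eq_mul_div]
  exact div_le_div₀ (by positivity [hc0 j]) (abs_two_mul_mul_sin_le (hc0 j) ψ) hε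
    (sq_one_sub_le_normSqOneSubExp (hc0 j) (hcq j) hq ψ)

theorem differentiable_tsum_div_normSqOneSubExp {a : ℕ → ℝ} (hc0 : ∀ j, 0 ≤ c j)
    (hcq : ∀ j, c j ≤ q) (hq : q < 1) (ha : Summable a) :
    Differentiable ℝ fun ψ => ∑' j, a j / normSqOneSubExp (c j) ψ := by
  have hε : 0 < (1 - q) ^ 2 := pow_pos (sub_pos.2 hq) 2
  have hc1 (j : ℕ) : c j ≤ 1 := (hcq j).trans hq.le
  refine differentiable_tsum' (ha.abs.mul_left (2 / ((1 - q) ^ 2) ^ 2))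
    (fun j ψ => (hasDerivAt_const ψ (a j)).div (hasDerivAt_normSqOneSubExp (c j) ψ)
      (normSqOneSubExp_pos (hc0 j) (hcq j) hq ψ).ne') (fun j ψ => ?_)
  have hg := sq_one_sub_le_normSqOneSubExp (hc0 j) (hcq j) hq ψ
  calc ‖(0 * _ - a j * (2 * c j * sin ψ)) / normSqOneSubExp (c j) ψ ^ 2‖
      = |a j| * |2 * c j * sin ψ| / normSqOneSubExp (c j) ψ ^ 2 := by
        rw [zero_mul, zero_sub, norm_div, norm_neg, norm_mul, norm_pow,
          Real.norm_of_nonneg (hε.trans_le hg).le, Real.norm_eq_abs, Real.norm_eq_abs]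
    _ ≤ |a j| * 2 / ((1 - q) ^ 2) ^ 2 := by
        gcongr
        exact (abs_two_mul_mul_sin_le (hc0 j) ψ).trans (by linarith [hc1 j])
    _ = 2 / ((1 - q) ^ 2) ^ 2 * |a j| := by ring

end Series

lemma hasDerivAt_sin_mul_of_differentiableAt_zero {S : ℝ → ℝ}
    (hS : DifferentiableAt ℝ S 0) : HasDerivAt (fun φ => sin φ * S φ) (S 0) 0 := by
  simpa using (hasDerivAt_sin 0).fun_mul hS.hasDerivAt

lemma antitoneOn_Icc_zero_pi_of_hasDerivAt {f S : ℝ → ℝ} {x : ℝ} (hx : 0 ≤ x)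
    (hS : ∀ φ, 0 ≤ S φ) (hf : ∀ φ, HasDerivAt f (-(x * sin φ) * S φ) φ) :
    AntitoneOn f (Icc 0 π) := by
  refine antitoneOn_of_deriv_nonpos (convex_Icc 0 π) (HasDerivAt.continuousOn fun φ _ => hf φ)
    (fun φ _ => (hf φ).differentiableAt.differentiableWithinAt) fun φ hφ => ?_
  rw [interior_Icc] at hφ
  rw [(hf φ).deriv, neg_mul, neg_nonpos]
  exact mul_nonneg (mul_nonneg hx (sin_nonneg_of_nonneg_of_le_pi hφ.1.le hφ.2.le)) (hS φ)

/-- Darwin–Fowler input: the real part of the finite-volume grand canonical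
pressure along the circle of radius `x`. With `0 < a_j ≤ r`, `Σ a_j < ∞`,
`0 < x < 1/r`, and `p(φ) = −(1/2) Σ_j log[(1 − x a_j cos φ)² + x² a_j² sin² φ]`:
(i) `p` is even; (ii) `p` is differentiable with
`p'(φ) = −x sin φ · Σ_j a_j/|1 − x a_j e^{iφ}|²`, hence decreasing on `[0, π]`;
(iii) `p` is twice differentiable at `0` with `p''(0) = −x Σ_j a_j/(1 − x a_j)²`. -/
theorem stmt_18 (a : ℕ → ℝ) (r x : ℝ) (ha : ∀ j, 0 < a j) (har : ∀ j, a j ≤ r)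
    (hsum : Summable a) (hx : 0 < x) (hxr : x < 1 / r) (p : ℝ → ℝ)
    (hp : ∀ φ : ℝ, p φ = -(1 / 2) * ∑' j : ℕ,
      Real.log ((1 - x * a j * Real.cos φ) ^ 2 + x ^ 2 * (a j) ^ 2 * (Real.sin φ) ^ 2)) :
    (∀ φ : ℝ, p (-φ) = p φ) ∧
    (∀ φ : ℝ, HasDerivAt p
      (-(x * Real.sin φ) *
        ∑' j : ℕ, a j / ‖(1 : ℂ) - (x : ℂ) * (a j : ℂ) * Complex.exp (φ * Complex.I)‖ ^ 2) φ) ∧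
    AntitoneOn p (Set.Icc 0 π) ∧
    HasDerivAt (deriv p) (-(x * ∑' j : ℕ, a j / (1 - x * a j) ^ 2)) 0 := by
  have hr : 0 < r := (ha 0).trans_le (har 0)
  have hq : x * r < 1 := by rwa [lt_div_iff₀ hr] at hxr
  have hc0 (j : ℕ) : 0 ≤ x * a j := (mul_pos hx (ha j)).le
  have hcq (j : ℕ) : x * a j ≤ x * r := mul_le_mul_of_nonneg_left (har j) hx.le
  set S : ℝ → ℝ := fun φ => ∑' j, a j / normSqOneSubExp (x * a j) φ
  have hp_eq : p = fun φ => -(1 / 2) * ∑' j, log (normSqOneSubExp (x * a j) φ) := by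
    funext φ
    simp only [hp φ, ← sq_one_sub_mul_cos_add_sq_mul_sin_sq, mul_pow]
  have hderiv (φ : ℝ) : HasDerivAt p (-(x * sin φ) * S φ) φ := by
    rw [hp_eq]
    refine ((hasDerivAt_tsum_log_normSqOneSubExp hc0 hcq hq (hsum.mul_left x) φ).const_mul
      _).congr_deriv ?_
    rw [← tsum_mul_left, ← tsum_mul_left]
    exact tsum_congr fun j => by ring
  refine ⟨fun φ => by simp only [hp_eq, normSqOneSubExp_neg], fun φ => ?_, ?_, ?_⟩
  · simpa only [← Complex.ofReal_mul, norm_one_sub_mul_exp_sq] using hderiv φ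
  · exact antitoneOn_Icc_zero_pi_of_hasDerivAt hx.le (fun φ => tsum_nonneg fun j =>
      div_nonneg (ha j).le (normSqOneSubExp_pos (hc0 j) (hcq j) hq φ).le) hderiv
  · have hdp : deriv p = fun φ => -x * (sin φ * S φ) :=
      funext fun φ => (hderiv φ).deriv.trans (by ring)
    rw [hdp]
    refine ((hasDerivAt_sin_mul_of_differentiableAt_zero
      (differentiable_tsum_div_normSqOneSubExp hc0 hcq hq hsum 0)).const_mul (-x)).congr_deriv ?_
    simp only [normSqOneSubExp_zero, neg_mul]
end
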